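/- arXiv:2504.18542 — 2 statements merged into one kernel-verified Lean document; each statement's English description precedes it below -/
import Mathlib

section
/- If m is a fundamental tuple with n = ord(m) > |idx(m)| + 2, then p = 3 and m_{0,1} + m_{1,1} + m_{2,1} = n. -/
/-- The index of rigidity of a tuple of `p` partitions of `n`. -/
def idx (p n : ℕ) (m : Fin p → List ℕ) : ℤ :=
  2 * (n : ℤ) ^ 2 - ∑ j : Fin p, ((n : ℤ) ^ 2 - ((m j).map (fun x => (x : ℤ) ^ 2)).sum)

/-- `m` is a tuple of `p` partitions of `n`: each `m j` is a monotone non-increasing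
list of positive integers summing to `n` with at least two parts. -/
def IsTuple (p n : ℕ) (m : Fin p → List ℕ) : Prop :=
  0 < n ∧ ∀ j, (m j).Pairwise (· ≥ ·) ∧ (∀ x ∈ m j, 0 < x) ∧ (m j).sum = n ∧ 2 ≤ (m j).length

/-- The tuple is indivisible: no integer `k ≥ 2` divides all the entries. -/
def Indivisible (p : ℕ) (m : Fin p → List ℕ) : Prop :=
  ∀ k : ℕ, (∀ j, ∀ x ∈ m j, k ∣ x) → k = 1

/-- The tuple is basic: it is a tuple of partitions, `2n ≤ Σⱼ (n − m_{j,1})`,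
and it is indivisible. -/
def IsBasic (p n : ℕ) (m : Fin p → List ℕ) : Prop :=
  IsTuple p n m ∧ 2 * (n : ℤ) ≤ (∑ j : Fin p, ((n : ℤ) - ((m j).headI : ℤ)))
    ∧ Indivisible p m

/-- The tuple is fundamental: it is basic, or it is a positive integer multiple `k·m'`
of a basic tuple `m'` with `idx m' ≠ 0`. -/
def IsFundamental (p n : ℕ) (m : Fin p → List ℕ) : Prop :=
  ∃ (k n' : ℕ) (m' : Fin p → List ℕ), 0 < k ∧ n = k * n' ∧
    (∀ j, m j = (m' j).map (fun x => k * x)) ∧ IsBasic p n' m' ∧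
    (k = 1 ∨ idx p n' m' ≠ 0)

/-!
Write `d_j = n - m_{j,1}` and
`e_j = n m_{j,1} - Σ_ν m_{j,ν}² = Σ_{ν ≥ 2} m_{j,ν} (m_{j,1} - m_{j,ν}) ≥ 0`,
so that `idx m = 2n² - Σ e_j - n Σ d_j`. Basicness survives scaling and gives `Σ d_j ≥ 2n`,
hence `idx m ≤ 0`, and `|idx m| < n - 2` forces `Σ d_j = 2n` and `Σ e_j ≤ n - 3`. Since
`d_j ≤ n - 1`, this needs `p ≥ 3`. A partition with `e_j ≤ n - 3` has `2 d_j ≥ n - 1`, and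
`e_j ≥ (n - 1) / 2` when `2 d_j = n - 1`; for `p ≥ 4` a parity count then leaves only
partitions `(n/2, n/2)`. But then `idx m = 0`, so the fundamental tuple `m` is basic, hence
indivisible, and `n = 2`.
-/

open Finset

def IsPartitionList (n : ℕ) (l : List ℕ) : Prop :=
  l.Pairwise (· ≥ ·) ∧ (∀ x ∈ l, 0 < x) ∧ l.sum = n ∧ 2 ≤ l.length

def headGap (n : ℕ) (l : List ℕ) : ℤ := n - l.headI

def headExcess (n : ℕ) (l : List ℕ) : ℤ :=
  n * l.headI - (l.map fun x : ℕ => (x : ℤ) ^ 2).sum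

lemma sub_one_le_mul_sub {x c : ℤ} (h1 : 1 ≤ x) (h2 : x < c) : c - 1 ≤ x * (c - x) := by
  nlinarith [mul_nonneg (sub_nonneg.2 h1) (sub_nonneg.2 (Int.le_sub_one_of_lt h2))]

lemma sum_map_mul_sub (c : ℕ) (T : List ℕ) :
    (T.map fun x : ℕ => (x : ℤ) * (c - x)).sum =
      c * T.sum - (T.map fun x : ℕ => (x : ℤ) ^ 2).sum := by
  induction T with
  | nil => simp
  | cons a T ih => simp only [List.map_cons, List.sum_cons, ih]; push_cast; ring

lemma sum_map_mul_sub_nonneg {c : ℕ} {T : List ℕ} (hT : ∀ x ∈ T, x ≤ c) :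
    0 ≤ (T.map fun x : ℕ => (x : ℤ) * (c - x)).sum :=
  List.sum_nonneg <| by
    simp only [List.mem_map]
    rintro _ ⟨x, hx, rfl⟩
    have := hT x hx
    exact mul_nonneg (by positivity) (by omega)

lemma headExcess_cons {n c : ℕ} {T : List ℕ} (h : c + T.sum = n) :
    headExcess n (c :: T) = (T.map fun x : ℕ => (x : ℤ) * (c - x)).sum := by
  rw [sum_map_mul_sub, headExcess, ← h]
  simp only [List.headI_cons, List.map_cons, List.sum_cons]
  push_cast
  ring

lemma headExcess_pair (n c : ℕ) : headExcess n [c, c] = c * (n - 2 * c) := by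
  simp only [headExcess, List.headI_cons, List.map_cons, List.map_nil, List.sum_cons, List.sum_nil]
  ring

namespace IsPartitionList

variable {n : ℕ} {l : List ℕ}

lemma ne_nil (h : IsPartitionList n l) : l ≠ [] := by
  rintro rfl
  simpa using h.2.2.2

lemma of_cons {c : ℕ} {T : List ℕ} (h : IsPartitionList n (c :: T)) :
    T ≠ [] ∧ c + T.sum = n ∧ ∀ x ∈ T, 0 < x ∧ x ≤ c := by
  obtain ⟨hsorted, hpos, hsum, hlen⟩ := h
  refine ⟨?_, by simpa using hsum, fun x hx => ⟨hpos x (List.mem_cons_of_mem c hx), ?_⟩⟩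
  · rintro rfl
    simp at hlen
  · exact (List.pairwise_cons.1 hsorted).1 x hx

lemma headExcess_nonneg (h : IsPartitionList n l) : 0 ≤ headExcess n l := by
  obtain ⟨c, T, rfl⟩ := List.exists_cons_of_ne_nil h.ne_nil
  obtain ⟨-, hsum, hT⟩ := h.of_cons
  rw [headExcess_cons hsum]
  exact sum_map_mul_sub_nonneg fun x hx => (hT x hx).2

lemma one_le_headGap (h : IsPartitionList n l) : 1 ≤ headGap n l := by
  obtain ⟨c, T, rfl⟩ := List.exists_cons_of_ne_nil h.ne_nil
  obtain ⟨hne, hsum, hT⟩ := h.of_cons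
  obtain ⟨t, T, rfl⟩ := List.exists_cons_of_ne_nil hne
  have := (hT t List.mem_cons_self).1
  simp only [List.sum_cons] at hsum
  simp only [headGap, List.headI_cons]
  omega

lemma headGap_le (h : IsPartitionList n l) : headGap n l ≤ n - 1 := by
  obtain ⟨c, T, rfl⟩ := List.exists_cons_of_ne_nil h.ne_nil
  have := h.2.1 c List.mem_cons_self
  simp only [headGap, List.headI_cons]
  omega

lemma headGap_mul_le_headExcess (h : IsPartitionList n l) :
    headGap n l * (n - 2 * headGap n l) ≤ headExcess n l := by
  obtain ⟨c, T, rfl⟩ := List.exists_cons_of_ne_nil h.ne_nil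
  obtain ⟨-, hsum, hT⟩ := h.of_cons
  rw [headExcess_cons hsum]
  have hterm : ∀ x ∈ T, (x : ℤ) * (c - T.sum) ≤ x * (c - x) := fun x hx =>
    mul_le_mul_of_nonneg_left (by have := List.le_sum_of_mem hx; omega) (by positivity)
  calc headGap n (c :: T) * (n - 2 * headGap n (c :: T))
      = (T.map fun x : ℕ => (x : ℤ) * (c - T.sum)).sum := by
        rw [List.sum_map_mul_right, ← Nat.cast_list_sum, headGap, List.headI_cons, ← hsum]
        push_cast
        ring
    _ ≤ (T.map fun x : ℕ => (x : ℤ) * (c - x)).sum := List.sum_le_sum hterm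

lemma sub_one_le_two_mul_headGap (h : IsPartitionList n l) (he : headExcess n l ≤ n - 3) :
    n - 1 ≤ 2 * headGap n l := by
  have := h.headGap_mul_le_headExcess
  have := h.one_le_headGap
  nlinarith

lemma sub_one_le_headGap_add_headExcess (h : IsPartitionList n l) (hd : 2 * headGap n l < n) :
    n - 1 ≤ headGap n l + headExcess n l := by
  obtain ⟨c, T, rfl⟩ := List.exists_cons_of_ne_nil h.ne_nil
  obtain ⟨hne, hsum, hT⟩ := h.of_cons
  obtain ⟨t, T, rfl⟩ := List.exists_cons_of_ne_nil hne
  have ht := (hT t List.mem_cons_self).1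
  simp only [List.sum_cons] at hsum
  simp only [headGap, List.headI_cons] at hd ⊢
  have hlarge : (c : ℤ) - 1 ≤ t * (c - t) := sub_one_le_mul_sub (by omega) (by omega)
  have hrest := sum_map_mul_sub_nonneg fun x hx => (hT x (List.mem_cons_of_mem t hx)).2
  rw [headExcess_cons (by simpa using hsum)]
  simp only [List.map_cons, List.sum_cons]
  omega

lemma eq_pair_of_two_mul_headGap_eq (h : IsPartitionList n l) (hd : 2 * headGap n l = n)
    (he : headExcess n l < n - 2) : l = [l.headI, l.headI] := by
  obtain ⟨c, T, rfl⟩ := List.exists_cons_of_ne_nil h.ne_nil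
  obtain ⟨hne, hsum, hT⟩ := h.of_cons
  simp only [headGap, List.headI_cons] at hd ⊢
  rw [headExcess_cons hsum] at he
  rcases T with _ | ⟨t₁, _ | ⟨t₂, T⟩⟩
  · exact absurd rfl hne
  · simp only [List.sum_cons, List.sum_nil] at hsum
    obtain rfl : t₁ = c := by omega
    rfl
  · simp only [List.sum_cons] at hsum
    have h₁ := (hT t₁ (by simp)).1
    have h₂ := (hT t₂ (by simp)).1
    have hlarge₁ : (c : ℤ) - 1 ≤ t₁ * (c - t₁) := sub_one_le_mul_sub (by omega) (by omega)
    have hlarge₂ : (c : ℤ) - 1 ≤ t₂ * (c - t₂) := sub_one_le_mul_sub (by omega) (by omega)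
    have hrest := sum_map_mul_sub_nonneg fun x hx =>
      (hT x (List.mem_cons_of_mem t₁ (List.mem_cons_of_mem t₂ hx))).2
    simp only [List.map_cons, List.sum_cons] at he
    omega

end IsPartitionList

lemma IsTuple.isPartitionList {p n : ℕ} {m : Fin p → List ℕ} (h : IsTuple p n m) (j : Fin p) :
    IsPartitionList n (m j) :=
  h.2 j

lemma idx_eq_sum_headExcess_headGap (p n : ℕ) (m : Fin p → List ℕ) :
    idx p n m = 2 * n ^ 2 - ∑ j, headExcess n (m j) - n * ∑ j, headGap n (m j) := by
  simp only [idx, headExcess, headGap, bind_pure_comp, List.map_eq_map, List.map_map, mul_sum,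
    sub_sub, ← sum_add_distrib]
  congr 1
  refine sum_congr rfl fun j _ => ?_
  simp only [Function.comp_def]
  ring

lemma headI_map_mul (k : ℕ) (l : List ℕ) : (l.map (k * ·)).headI = k * l.headI := by
  cases l <;> simp

lemma IsTuple.map_mul {p n k : ℕ} {m : Fin p → List ℕ} (hk : 0 < k) (h : IsTuple p n m) :
    IsTuple p (k * n) fun j => (m j).map (k * ·) := by
  refine ⟨Nat.mul_pos hk h.1, fun j => ?_⟩
  obtain ⟨hsorted, hpos, hsum, hlen⟩ := h.2 j
  refine ⟨hsorted.map _ fun a b hab => Nat.mul_le_mul_left k hab, ?_, ?_, by simpa using hlen⟩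
  · simp only [List.mem_map]
    rintro _ ⟨x, hx, rfl⟩
    exact Nat.mul_pos hk (hpos x hx)
  · rw [List.sum_map_mul_left, List.map_id', hsum]

lemma idx_map_mul (p n k : ℕ) (m : Fin p → List ℕ) :
    idx p (k * n) (fun j => (m j).map (k * ·)) = k ^ 2 * idx p n m := by
  simp only [idx, bind_pure_comp, List.map_eq_map, List.map_map, Function.comp_def]
  push_cast
  simp only [mul_pow, List.sum_map_mul_left, ← mul_sub, ← mul_sum]
  ring

lemma sum_headGap_map_mul (p n k : ℕ) (m : Fin p → List ℕ) :
    ∑ j, headGap (k * n) ((m j).map (k * ·)) = k * ∑ j, headGap n (m j) := by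
  simp only [headGap, headI_map_mul, mul_sum]
  push_cast
  refine sum_congr rfl fun j _ => by ring

namespace IsFundamental

variable {p n : ℕ} {m : Fin p → List ℕ}

lemma isTuple (h : IsFundamental p n m) : IsTuple p n m := by
  obtain ⟨k, n', m', hk, rfl, hm, ⟨htup, -⟩, -⟩ := h
  obtain rfl : m = fun j => (m' j).map (k * ·) := funext hm
  exact htup.map_mul hk

lemma two_mul_le_sum_headGap (h : IsFundamental p n m) :
    2 * (n : ℤ) ≤ ∑ j, headGap n (m j) := by
  obtain ⟨k, n', m', hk, rfl, hm, ⟨-, hbasic, -⟩, -⟩ := h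
  obtain rfl : m = fun j => (m' j).map (k * ·) := funext hm
  change 2 * (n' : ℤ) ≤ ∑ j, headGap n' (m' j) at hbasic
  rw [sum_headGap_map_mul]
  push_cast
  linarith [mul_le_mul_of_nonneg_left hbasic (Nat.cast_nonneg (α := ℤ) k)]

lemma eq_one_of_idx_eq_zero (h : IsFundamental p n m) (h0 : idx p n m = 0) {a : ℕ}
    (ha : ∀ j, ∀ x ∈ m j, x = a) : a = 1 := by
  obtain ⟨k, n', m', hk, rfl, hm, ⟨-, -, hindiv⟩, hk1⟩ := h
  obtain rfl : m = fun j => (m' j).map (k * ·) := funext hm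
  obtain rfl : k = 1 := hk1.resolve_right fun h0' => by
    rw [idx_map_mul] at h0
    exact h0' ((mul_eq_zero.1 h0).resolve_left (by positivity))
  refine hindiv a fun j x hx => ?_
  rw [ha j x (by simpa using hx)]

end IsFundamental

lemma sum_headGap_eq_and_sum_headExcess_le {p n : ℕ} {m : Fin p → List ℕ}
    (htup : IsTuple p n m) (hgap : 2 * (n : ℤ) ≤ ∑ j, headGap n (m j))
    (hbig : |idx p n m| + 2 < (n : ℤ)) :
    ∑ j, headGap n (m j) = 2 * n ∧ ∑ j, headExcess n (m j) ≤ n - 3 := by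
  have hn : (0 : ℤ) ≤ n := by linarith [abs_nonneg (idx p n m)]
  have hlt : -idx p n m + 2 < n := by linarith [neg_le_abs (idx p n m)]
  rw [idx_eq_sum_headExcess_headGap] at hlt
  have hexc : 0 ≤ ∑ j, headExcess n (m j) :=
    sum_nonneg fun j _ => (htup.isPartitionList j).headExcess_nonneg
  obtain hgap | hgap := hgap.eq_or_lt
  · rw [← hgap] at hlt ⊢
    exact ⟨rfl, by linarith⟩
  · have := mul_le_mul_of_nonneg_left (Int.add_one_le_of_lt hgap) hn
    linarith

lemma three_le_card_of_sum_eq {ι : Type*} [Fintype ι] {n : ℤ} (hn : 0 < n) {d : ι → ℤ}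
    (hd : ∑ j, d j = 2 * n) (hle : ∀ j, d j ≤ n - 1) : 3 ≤ Fintype.card ι := by
  by_contra! hcard
  have hsum : ∑ j, d j ≤ ∑ _j : ι, (n - 1) := sum_le_sum fun j _ => hle j
  rw [sum_const, card_univ, nsmul_eq_mul] at hsum
  have : (Fintype.card ι : ℤ) ≤ 2 := by exact_mod_cast Nat.le_of_lt_succ hcard
  nlinarith

lemma forall_two_mul_eq_of_four_le_card {ι : Type*} [Fintype ι] {n : ℤ} {d e : ι → ℤ}
    (hd : ∑ j, d j = 2 * n) (he : ∑ j, e j ≤ n - 3) (he0 : ∀ j, 0 ≤ e j)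
    (hlow : ∀ j, n - 1 ≤ 2 * d j) (hodd : ∀ j, 2 * d j = n - 1 → n - 1 ≤ d j + e j)
    (hcard : 4 ≤ Fintype.card ι) : ∀ j, 2 * d j = n := by
  have hn : 3 ≤ n := by linarith [sum_nonneg fun j (_ : j ∈ univ) => he0 j]
  have hcard' : (4 : ℤ) ≤ Fintype.card ι := by exact_mod_cast hcard
  have hsum : ∑ j, (2 * d j - n) = (4 - Fintype.card ι) * n := by
    rw [sum_sub_distrib, ← mul_sum, hd, sum_const, card_univ, nsmul_eq_mul]
    ring
  obtain ⟨r, hr | hr⟩ := Int.even_or_odd' n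
  · have hnonneg : ∀ j ∈ univ, 0 ≤ 2 * d j - n := fun j _ => by
      have := hlow j
      omega
    have hzero : ∑ j, (2 * d j - n) = 0 :=
      le_antisymm (by rw [hsum]; nlinarith) (sum_nonneg hnonneg)
    intro j
    linarith [(sum_eq_zero_iff_of_nonneg hnonneg).1 hzero j (mem_univ j)]
  · -- `n` is odd, so `2 d_j` is either `n - 1`, where `4 e_j ≥ 2 (n - 1)`, or at least `n + 1`
    have hterm : ∀ j ∈ univ, (n - 1) * (1 - (2 * d j - n)) ≤ 4 * e j := fun j _ => by
      rcases (hlow j).eq_or_lt with h | h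
      · rw [← h]
        linarith [hodd j h.symm]
      · have : n + 1 ≤ 2 * d j := by omega
        nlinarith [he0 j]
    have hbound := sum_le_sum hterm
    rw [← mul_sum, ← mul_sum, sum_sub_distrib, hsum, sum_const, card_univ, nsmul_one] at hbound
    nlinarith [mul_nonneg (mul_nonneg (by linarith : (0 : ℤ) ≤ n - 1) (sub_nonneg.2 hcard'))
      (by linarith : (0 : ℤ) ≤ n + 1)]

lemma IsFundamental.card_lt_four {p n : ℕ} {m : Fin p → List ℕ} (hf : IsFundamental p n m)
    (hgap : ∑ j, headGap n (m j) = 2 * n) (hexc : ∑ j, headExcess n (m j) ≤ n - 3) :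
    p < 4 := by
  have hpart : ∀ j, IsPartitionList n (m j) := hf.isTuple.isPartitionList
  have hexc_le : ∀ j, headExcess n (m j) ≤ n - 3 := fun j =>
    (single_le_sum (fun i _ => (hpart i).headExcess_nonneg) (mem_univ j)).trans hexc
  by_contra! h4
  have hhalf : ∀ j, 2 * headGap n (m j) = n :=
    forall_two_mul_eq_of_four_le_card hgap hexc (fun j => (hpart j).headExcess_nonneg)
      (fun j => (hpart j).sub_one_le_two_mul_headGap (hexc_le j))
      (fun j h => (hpart j).sub_one_le_headGap_add_headExcess (by omega)) (by simpa using h4)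
  have hpair : ∀ j, m j = [(m j).headI, (m j).headI] := fun j =>
    (hpart j).eq_pair_of_two_mul_headGap_eq (hhalf j) (by linarith [hexc_le j])
  have hhead : ∀ j, 2 * (m j).headI = n := fun j => by
    have := hhalf j
    simp only [headGap] at this
    omega
  have hidx : idx p n m = 0 := by
    rw [idx_eq_sum_headExcess_headGap, hgap, sum_eq_zero fun j _ => ?_]
    · ring
    · rw [hpair j, headExcess_pair, ← hhead j]
      push_cast
      ring
  let j₀ : Fin p := ⟨0, by omega⟩
  have hone := hf.eq_one_of_idx_eq_zero hidx (a := (m j₀).headI) fun j x hx => by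
    rw [hpair j] at hx
    have := hhead j
    have := hhead j₀
    simp only [List.mem_cons, List.not_mem_nil, or_false, or_self] at hx
    omega
  have := hhead j₀
  have hn : (3 : ℤ) ≤ n := by
    linarith [sum_nonneg fun j (_ : j ∈ univ) => (hpart j).headExcess_nonneg]
  omega

/-- If `m` is a fundamental tuple with `n = ord m > |idx m| + 2`, then `p = 3` and
the first (largest) parts of the three partitions sum to `n`. -/
theorem three_partitions_of_large_order (p n : ℕ) (m : Fin p → List ℕ)
    (hfund : IsFundamental p n m)
    (hbig : (|idx p n m| + 2 : ℤ) < n) :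
    p = 3 ∧ (∑ j : Fin p, ((m j).headI : ℤ)) = n := by
  have hpart : ∀ j, IsPartitionList n (m j) := hfund.isTuple.isPartitionList
  obtain ⟨hgap, hexc⟩ :=
    sum_headGap_eq_and_sum_headExcess_le hfund.isTuple hfund.two_mul_le_sum_headGap hbig
  have hp3 : 3 ≤ p := by
    simpa using three_le_card_of_sum_eq (by linarith [abs_nonneg (idx p n m)]) hgap
      fun j => (hpart j).headGap_le
  obtain rfl : p = 3 := by
    have := hfund.card_lt_four hgap hexc
    omega
  refine ⟨rfl, ?_⟩
  have hhead : ∀ j, ((m j).headI : ℤ) = n - headGap n (m j) := fun j => by simp [headGap]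
  simp only [hhead, sum_sub_distrib, hgap, sum_const, card_univ, Fintype.card_fin]
  ring
end

section
/- Up to permutation of partitions, the only indivisible basic tuples m with idx(m) = 0 are: (1²,1²,1²,1²) of order 2, (1³,1³,1³) of order 3, (2²,1⁴,1⁴) of order 4, and (3²,2³,1⁶) of order 6. -/
open Finset

theorem List.le_headI_of_pairwise_ge {α : Type*} [Preorder α] [Inhabited α] {l : List α}
    (hl : l.Pairwise (· ≥ ·)) {x : α} (hx : x ∈ l) : x ≤ l.headI := by
  cases l with
  | nil => cases hx
  | cons y l =>
    rcases List.mem_cons.mp hx with rfl | hx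
    · exact le_rfl
    · exact List.rel_of_pairwise_cons hl hx

theorem List.mul_sum {R : Type*} [NonUnitalNonAssocSemiring R] (a : R) (l : List R) :
    a * l.sum = (l.map (a * ·)).sum := by
  simpa using (List.sum_map_mul_left l id a).symm

theorem List.sum_map_sq_le_mul_sum {l : List ℕ} {a : ℕ} (h : ∀ x ∈ l, x ≤ a) :
    (l.map (· ^ 2)).sum ≤ a * l.sum := by
  rw [List.mul_sum]
  exact List.sum_le_sum fun x hx => by simpa [sq] using Nat.mul_le_mul_right x (h x hx)

theorem List.eq_replicate_of_sum_map_sq_eq {l : List ℕ} {a : ℕ} (hpos : ∀ x ∈ l, 0 < x)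
    (hle : ∀ x ∈ l, x ≤ a) (heq : (l.map (· ^ 2)).sum = a * l.sum) :
    l = List.replicate l.length a := by
  refine List.eq_replicate_iff.mpr ⟨rfl, fun x hx => ?_⟩
  by_contra hne
  have hlt := List.sum_lt_sum (· ^ 2) (a * ·)
    (fun y hy => by simpa [sq] using Nat.mul_le_mul_right y (hle y hy))
    ⟨x, hx, by simpa [sq] using
      Nat.mul_lt_mul_of_pos_right (lt_of_le_of_ne (hle x hx) hne) (hpos x hx)⟩
  rw [← List.mul_sum] at hlt
  exact hlt.ne heq

theorem List.mul_sub_headI_le_sq_sub_sum_sq {l : List ℕ} (hl : l.Pairwise (· ≥ ·)) :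
    (l.sum : ℤ) * (l.sum - l.headI) ≤ (l.sum : ℤ) ^ 2 - ((l.map (· ^ 2)).sum : ℕ) := by
  have : (((l.map (· ^ 2)).sum : ℕ) : ℤ) ≤ l.headI * l.sum := by
    exact_mod_cast List.sum_map_sq_le_mul_sum fun x hx => List.le_headI_of_pairwise_ge hl hx
  linarith

theorem List.length_mul_headI_eq_sum {l : List ℕ} (h : l = List.replicate l.length l.headI) :
    l.length * l.headI = l.sum := by
  conv_rhs => rw [h]
  rw [List.sum_replicate, smul_eq_mul]

theorem idx_eq_sub_sum (p n : ℕ) (m : Fin p → List ℕ) :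
    idx p n m = 2 * (n : ℤ) ^ 2 - ∑ j, ((n : ℤ) ^ 2 - (((m j).map (· ^ 2)).sum : ℕ)) := by
  -- In `idx`, `(m j).map (fun x => (x : ℤ) ^ 2)` coerces `m j` to `List ℤ` through the list monad.
  have hcoe (l : List ℕ) : (l >>= fun a => pure (a : ℤ)) = l.map Nat.cast :=
    List.flatMap_pure_eq_map _ l
  simp only [idx, hcoe, Nat.cast_list_sum, List.map_map]
  rfl

theorem IsBasic.eq_replicate_of_idx_eq_zero {p n : ℕ} {m : Fin p → List ℕ}
    (hb : IsBasic p n m) (hidx : idx p n m = 0) :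
    (∀ j, m j = List.replicate (m j).length (m j).headI) ∧
      ∑ j, ((n : ℤ) - (m j).headI) = 2 * n := by
  obtain ⟨⟨hn, hm⟩, hhead, -⟩ := hb
  have hle : ∀ j ∈ univ, (n : ℤ) * (n - (m j).headI) ≤
      (n : ℤ) ^ 2 - (((m j).map (· ^ 2)).sum : ℕ) := fun j _ => by
    simpa [(hm j).2.2.1] using List.mul_sub_headI_le_sq_sub_sum_sq (hm j).1
  have hsum_le : 2 * (n : ℤ) ^ 2 ≤ (n : ℤ) * ∑ j, ((n : ℤ) - (m j).headI) :=
    calc 2 * (n : ℤ) ^ 2 = n * (2 * n) := by ring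
      _ ≤ _ := mul_le_mul_of_nonneg_left hhead (Int.natCast_nonneg n)
  have hsum_eq : ∑ j, (n : ℤ) * (n - (m j).headI) =
      ∑ j, ((n : ℤ) ^ 2 - (((m j).map (· ^ 2)).sum : ℕ)) := by
    rw [idx_eq_sub_sum] at hidx
    refine le_antisymm (sum_le_sum hle) ?_
    rw [← mul_sum]
    linarith
  refine ⟨fun j => ?_, ?_⟩
  · have hj := (sum_eq_sum_iff_of_le hle).mp hsum_eq j (mem_univ j)
    refine List.eq_replicate_of_sum_map_sq_eq (hm j).2.1
      (fun x hx => List.le_headI_of_pairwise_ge (hm j).1 hx) ?_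
    rw [(hm j).2.2.1]
    have : ((((m j).map (· ^ 2)).sum : ℕ) : ℤ) = (m j).headI * n := by linarith
    exact_mod_cast this
  · rw [idx_eq_sub_sum, ← hsum_eq, ← mul_sum] at hidx
    have hn' : (n : ℤ) ≠ 0 := by exact_mod_cast hn.ne'
    exact mul_left_cancel₀ hn' (by linarith)

theorem le_six_of_inv_add_inv_add_inv_eq_one {x y z : ℕ} (hy : 2 ≤ y) (hz : 2 ≤ z)
    (h : (x : ℚ)⁻¹ + (y : ℚ)⁻¹ + (z : ℚ)⁻¹ = 1) : x ≤ 6 := by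
  rcases Nat.eq_zero_or_pos x with rfl | hx
  · omega
  have hyz : (y : ℚ)⁻¹ + (z : ℚ)⁻¹ ≤ 2⁻¹ + 3⁻¹ := by
    have hy' : (2 : ℚ) ≤ y := by exact_mod_cast hy
    have hz' : (2 : ℚ) ≤ z := by exact_mod_cast hz
    rcases (by omega : y = 2 ∧ z = 2 ∨ 3 ≤ y ∨ 3 ≤ z) with ⟨rfl, rfl⟩ | hy3 | hz3
    · have : (0 : ℚ) < (x : ℚ)⁻¹ := by positivity
      push_cast at h
      linarith
    · have : (3 : ℚ) ≤ y := by exact_mod_cast hy3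
      rw [add_comm (2⁻¹ : ℚ)]
      gcongr
    · have : (3 : ℚ) ≤ z := by exact_mod_cast hz3
      gcongr
  by_contra! hx7
  have : (x : ℚ)⁻¹ ≤ 7⁻¹ := by
    have : (7 : ℚ) ≤ x := by exact_mod_cast hx7
    gcongr
  linarith

theorem eq_of_sum_one_sub_inv_eq_two {s : Multiset ℕ} (h2 : ∀ l ∈ s, 2 ≤ l)
    (hs : (s.map fun l : ℕ => 1 - (l : ℚ)⁻¹).sum = 2) :
    s = {2, 2, 2, 2} ∨ s = {3, 3, 3} ∨ s = {2, 4, 4} ∨ s = {2, 3, 6} := by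
  have hhalf : ∀ l ∈ s, (2⁻¹ : ℚ) ≤ 1 - (l : ℚ)⁻¹ := fun l hl => by
    have : (2 : ℚ) ≤ l := by exact_mod_cast h2 l hl
    have : (l : ℚ)⁻¹ ≤ 2⁻¹ := by gcongr
    linarith
  have hcard_le : s.card ≤ 4 := by
    have := Multiset.card_nsmul_le_sum (s := s.map fun l : ℕ => 1 - (l : ℚ)⁻¹)
      (a := 2⁻¹) (by simpa using hhalf)
    rw [hs, Multiset.card_map, nsmul_eq_mul] at this
    have : (s.card : ℚ) ≤ 4 := by linarith
    exact_mod_cast this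
  have hcard_gt : 2 < s.card := by
    have hne : s ≠ ∅ := by rintro rfl; simp at hs
    have := Multiset.sum_lt_sum_of_nonempty (f := fun l : ℕ => 1 - (l : ℚ)⁻¹) (g := fun _ => 1)
      hne fun l hl => sub_lt_self 1 (inv_pos.mpr (Nat.cast_pos.mpr (by have := h2 l hl; omega)))
    rw [hs, Multiset.map_const', Multiset.sum_replicate, nsmul_eq_mul, mul_one] at this
    exact_mod_cast this
  rcases (by omega : s.card = 3 ∨ s.card = 4) with hc | hc
  · obtain ⟨a, b, c, rfl⟩ := Multiset.card_eq_three.mp hc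
    simp only [Multiset.insert_eq_cons, Multiset.mem_cons, Multiset.mem_singleton,
      forall_eq_or_imp, forall_eq] at h2
    obtain ⟨ha, hb, hc⟩ := h2
    have hinv : (a : ℚ)⁻¹ + (b : ℚ)⁻¹ + (c : ℚ)⁻¹ = 1 := by
      simp only [Multiset.insert_eq_cons, Multiset.map_cons, Multiset.map_singleton,
        Multiset.sum_cons, Multiset.sum_singleton] at hs
      linarith
    have ha6 := le_six_of_inv_add_inv_add_inv_eq_one hb hc hinv
    have hb6 := le_six_of_inv_add_inv_add_inv_eq_one (x := b) ha hc (by linarith)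
    have hc6 := le_six_of_inv_add_inv_add_inv_eq_one (x := c) ha hb (by linarith)
    interval_cases a <;> interval_cases b <;> interval_cases c <;>
      first | decide | norm_num at hinv
  · left
    refine Multiset.eq_replicate.mpr ⟨hc, fun l hl => ?_⟩
    obtain ⟨t, rfl⟩ := Multiset.exists_cons_of_mem hl
    have ht := Multiset.card_nsmul_le_sum (s := t.map fun l : ℕ => 1 - (l : ℚ)⁻¹)
      (a := 2⁻¹) (by simpa using fun l hl => hhalf l (Multiset.mem_cons_of_mem hl))
    rw [Multiset.card_cons] at hc
    rw [Multiset.card_map, show t.card = 3 by omega, nsmul_eq_mul] at ht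
    rw [Multiset.map_cons, Multiset.sum_cons] at hs
    have := h2 l hl
    by_contra! hl2
    have : (l : ℚ)⁻¹ ≤ 3⁻¹ := by
      have : (3 : ℚ) ≤ l := by exact_mod_cast (by omega : 3 ≤ l)
      gcongr
    push_cast at ht
    linarith

theorem IsBasic.eq_replicate_div_length_of_idx_eq_zero {p n : ℕ} {m : Fin p → List ℕ}
    (hb : IsBasic p n m) (hidx : idx p n m = 0) :
    (∀ j, m j = List.replicate (m j).length (n / (m j).length)) ∧ (∀ j, (m j).length ∣ n) ∧
      ∑ j, (1 - ((m j).length : ℚ)⁻¹) = 2 := by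
  obtain ⟨hrep, hsum⟩ := hb.eq_replicate_of_idx_eq_zero hidx
  obtain ⟨⟨hn, hm⟩, -⟩ := hb
  have hprod : ∀ j, (m j).length * (m j).headI = n := fun j =>
    (List.length_mul_headI_eq_sum (hrep j)).trans (hm j).2.2.1
  have hlen : ∀ j, 0 < (m j).length := fun j => by have := (hm j).2.2.2; omega
  have hhead : ∀ j, (m j).headI = n / (m j).length := fun j =>
    (Nat.div_eq_of_eq_mul_right (hlen j) (hprod j).symm).symm
  refine ⟨fun j => by rw [← hhead j]; exact hrep j, fun j => Dvd.intro _ (hprod j), ?_⟩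
  have hq : ∀ j, ((m j).headI : ℚ) = n * ((m j).length : ℚ)⁻¹ := fun j => by
    rw [← hprod j]; push_cast; field_simp [(hlen j).ne']
  have hsumq : ∑ j, ((n : ℚ) - n * ((m j).length : ℚ)⁻¹) = 2 * n := by
    simp_rw [← hq]; exact_mod_cast hsum
  have hn' : (n : ℚ) ≠ 0 := by exact_mod_cast hn.ne'
  refine mul_left_cancel₀ hn' ?_
  simp_rw [mul_sum, mul_sub, mul_one]
  linarith

theorem Indivisible.eq_lcm {p n : ℕ} {m : Fin p → List ℕ} (hind : Indivisible p m)
    {ℓ : Fin p → ℕ} (hm : ∀ j, m j = List.replicate (ℓ j) (n / ℓ j)) (hdvd : ∀ j, ℓ j ∣ n) :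
    n = (univ.val.map ℓ).lcm := by
  obtain ⟨k, rfl⟩ : (univ.val.map ℓ).lcm ∣ n := Multiset.lcm_dvd.mpr (by simpa using hdvd)
  suffices k = 1 by rw [this, mul_one]
  refine hind k fun j x hx => ?_
  rw [hm j] at hx
  rw [List.eq_of_mem_replicate hx, mul_comm,
    Nat.mul_div_assoc k (Multiset.dvd_lcm (Multiset.mem_map_of_mem ℓ (mem_univ_val j)))]
  exact dvd_mul_right k _

/-- Up to permutation of the partitions, the only indivisible basic tuples with
index of rigidity 0 are `1²,1²,1²,1²`, `1³,1³,1³`, `2²,1⁴,1⁴` and `3²,2³,1⁶`. -/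
theorem basic_idx_zero_classification (p n : ℕ) (m : Fin p → List ℕ)
    (hbasic : IsBasic p n m) (hidx : idx p n m = 0) :
    (Finset.univ.val.map m : Multiset (List ℕ)) = {[1,1], [1,1], [1,1], [1,1]} ∨
    (Finset.univ.val.map m : Multiset (List ℕ)) = {[1,1,1], [1,1,1], [1,1,1]} ∨
    (Finset.univ.val.map m : Multiset (List ℕ)) = {[2,2], [1,1,1,1], [1,1,1,1]} ∨
    (Finset.univ.val.map m : Multiset (List ℕ)) = {[3,3], [2,2,2], [1,1,1,1,1,1]} := by
  obtain ⟨hrep, hdvd, hsum⟩ := hbasic.eq_replicate_div_length_of_idx_eq_zero hidx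
  set s := univ.val.map fun j => (m j).length with hs
  have hn : n = s.lcm := hbasic.2.2.eq_lcm hrep hdvd
  have hm : univ.val.map m = s.map fun k => List.replicate k (s.lcm / k) := by
    rw [hs, Multiset.map_map, ← hn]
    exact Multiset.map_congr rfl fun j _ => hrep j
  have h2 : ∀ k ∈ s, 2 ≤ k := by simpa [hs] using fun j => (hbasic.1.2 j).2.2.2
  have hsum' : (s.map fun k : ℕ => 1 - (k : ℚ)⁻¹).sum = 2 := by
    rw [hs, Multiset.map_map]
    exact hsum
  rcases eq_of_sum_one_sub_inv_eq_two h2 hsum' with h | h | h | h <;> rw [hm, h] <;> decide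
end
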